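/- Let α > 0 and suppose that ∂_r v(α, r) > 0 and v(α, r) ≤ 1 for all r ∈ (0, R_α). Then R_α = ∞ and lim_{r→∞} v(α, r) = 1. -/

import Mathlib

open Filter Set Topology

/-- The degree-`n` vortex equation at a point `r`:
`(1/2)·u'' + (1/2)·coth(r)·u' − (n²/(2·sinh²(r)))·u + u − u³ = 0`. -/
def VortexEqAt (n : ℝ) (u : ℝ → ℝ) (r : ℝ) : Prop :=
  (1/2) * deriv (deriv u) r + (1/2) * (Real.cosh r / Real.sinh r) * deriv u r
    - n ^ 2 / (2 * Real.sinh r ^ 2) * u r + u r - u r ^ 3 = 0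

/-- `u` is a (C²) solution of the degree-`n` vortex equation on the set `s`. -/
def IsVortexSolOn (n : ℝ) (u : ℝ → ℝ) (s : Set ℝ) : Prop :=
  ContDiffOn ℝ 2 u s ∧ ∀ r ∈ s, VortexEqAt n u r

/-- The interval `(0, R)` for an extended-real right endpoint `R`. -/
def MaxDom (R : EReal) : Set ℝ := {r : ℝ | 0 < r ∧ (r : EReal) < R}

/-- `u` is the maximal solution of the degree-`n` vortex equation on `(0, R)` with
`u(r)/rⁿ → α` as `r → 0⁺`: it solves the equation, has the prescribed behaviour at the
origin, every solution with the same behaviour at the origin is defined at most up to `R`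
and agrees with `u`, and either `R = ∞` or `u` blows up at `R⁻`. -/
def IsMaximalVortexSol (n α : ℝ) (u : ℝ → ℝ) (R : EReal) : Prop :=
  0 < R ∧
  IsVortexSolOn n u (MaxDom R) ∧
  Tendsto (fun r => u r / r ^ n) (nhdsWithin 0 (Set.Ioi 0)) (nhds α) ∧
  (∀ b : ℝ, 0 < b → ∀ w : ℝ → ℝ, IsVortexSolOn n w (Set.Ioo 0 b) →
    Tendsto (fun r => w r / r ^ n) (nhdsWithin 0 (Set.Ioi 0)) (nhds α) →
    (b : EReal) ≤ R ∧ Set.EqOn w u (Set.Ioo 0 b)) ∧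
  (R = ⊤ ∨ ∃ Rr : ℝ, R = (Rr : EReal) ∧
    Tendsto u (nhdsWithin Rr (Set.Iio Rr)) atTop)

/-!
An increasing solution bounded by `1` cannot blow up, so `R_α = ∞`, and it converges to some
`L ∈ (0, 1]`. In divergence form the equation reads
`(sinh r · v')' = n² v / sinh r − 2 sinh r · (v − v³)`. If `L < 1`, the right-hand side is
eventually at most `−(L − L³)/2`, so the flux `sinh r · v'` tends to `−∞`, contradicting
`v' > 0`.
-/

theorem eq_top_of_bddAbove_image_maxDom {u : ℝ → ℝ} {R : EReal} (hR : 0 < R)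
    (halt : R = ⊤ ∨ ∃ Rr : ℝ, R = Rr ∧ Tendsto u (𝓝[<] Rr) atTop)
    (hbdd : BddAbove (u '' MaxDom R)) : R = ⊤ := by
  rcases halt with h | ⟨Rr, rfl, hblow⟩
  · exact h
  obtain ⟨C, hC⟩ := hbdd
  have hRr : 0 < Rr := by exact_mod_cast hR
  obtain ⟨r, hCr, hr⟩ :=
    ((hblow.eventually_gt_atTop C).and (Ioo_mem_nhdsLT hRr)).exists
  exact absurd (hC ⟨r, ⟨hr.1, by exact_mod_cast hr.2⟩, rfl⟩) (not_le.2 hCr)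

theorem MonotoneOn.exists_tendsto_atTop {u : ℝ → ℝ} {a : ℝ} (hmono : MonotoneOn u (Ici a))
    (hbdd : BddAbove (u '' Ici a)) : ∃ L, Tendsto u atTop (𝓝 L) := by
  have hmono' : Monotone fun x => u (max a x) := fun x y hxy =>
    hmono (mem_Ici.2 le_sup_left) (mem_Ici.2 le_sup_left) (max_le_max le_rfl hxy)
  have hbdd' : BddAbove (range fun x => u (max a x)) :=
    hbdd.mono (range_subset_iff.2 fun x => mem_image_of_mem u le_sup_left)
  refine ⟨_, (tendsto_atTop_ciSup hmono' hbdd').congr' ?_⟩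
  filter_upwards [eventually_ge_atTop a] with x hx
  rw [max_eq_right hx]

theorem tendsto_atBot_of_hasDerivAt_le_neg {g g' : ℝ → ℝ} {ε : ℝ} (hε : 0 < ε)
    (h : ∀ᶠ x in atTop, HasDerivAt g (g' x) x ∧ g' x ≤ -ε) : Tendsto g atTop atBot := by
  obtain ⟨a, ha⟩ := eventually_atTop.1 h
  have hslope : ∀ x ≥ a, g x - g a ≤ -ε * (x - a) := fun x hx =>
    (convex_Ici a).image_sub_le_mul_sub_of_deriv_le
      (fun y hy => (ha y hy).1.continuousAt.continuousWithinAt)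
      (fun y hy => (ha y (interior_subset hy)).1.differentiableAt.differentiableWithinAt)
      (fun y hy => (ha y (interior_subset hy)).1.deriv.trans_le (ha y (interior_subset hy)).2)
      a (mem_Ici.2 le_rfl) x hx hx
  refine tendsto_atBot_mono' atTop ?_ (tendsto_atBot_add_const_left atTop (g a + ε * a)
    (tendsto_id.const_mul_atTop_of_neg (neg_lt_zero.2 hε)))
  filter_upwards [eventually_ge_atTop a] with x hx
  simp only [id]
  linarith [hslope x hx]

theorem Real.tendsto_sinh_atTop : Tendsto Real.sinh atTop atTop :=
  tendsto_atTop_mono' atTop (eventually_ge_atTop 0 |>.mono fun _ => Real.self_le_sinh_iff.2)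
    tendsto_id

theorem IsVortexSolOn.hasDerivAt_sinh_mul_deriv {n : ℝ} {u : ℝ → ℝ} {s : Set ℝ}
    (hsol : IsVortexSolOn n u s) (hs : IsOpen s) {r : ℝ} (hr : r ∈ s) (hr0 : r ≠ 0) :
    HasDerivAt (fun x => Real.sinh x * deriv u x)
      (n ^ 2 * u r / Real.sinh r - 2 * Real.sinh r * (u r - u r ^ 3)) r := by
  have hC1 : ContDiffOn ℝ 1 (deriv u) s := hsol.1.deriv_of_isOpen hs (by norm_num)
  have hdiff : DifferentiableAt ℝ (deriv u) r :=
    (hC1.differentiableOn one_ne_zero).differentiableAt (hs.mem_nhds hr)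
  have hS : Real.sinh r ≠ 0 := Real.sinh_ne_zero.2 hr0
  refine ((Real.hasDerivAt_sinh r).mul hdiff.hasDerivAt).congr_deriv ?_
  have heq := hsol.2 r hr
  unfold VortexEqAt at heq
  field_simp at heq ⊢
  linear_combination heq

theorem one_le_of_isVortexSolOn_Ioi_of_tendsto {n L : ℝ} {u : ℝ → ℝ}
    (hsol : IsVortexSolOn n u (Ioi 0)) (hderiv : ∀ r ∈ Ioi (0 : ℝ), 0 < deriv u r)
    (hL : Tendsto u atTop (𝓝 L)) (hL0 : 0 < L) : 1 ≤ L := by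
  by_contra! hL1
  set c := L - L ^ 3
  have hc : 0 < c := by nlinarith [mul_pos hL0 (mul_pos (sub_pos.2 hL1) (add_pos one_pos hL0))]
  have hsmall : ∀ᶠ r in atTop, n ^ 2 * u r / Real.sinh r ≤ c / 2 :=
    ((hL.const_mul (n ^ 2)).div_atTop Real.tendsto_sinh_atTop).eventually_le_const (by linarith)
  have hcubic : ∀ᶠ r in atTop, c / 2 < u r - u r ^ 3 :=
    (hL.sub (hL.pow 3)).eventually_const_lt (by linarith)
  have hflux : Tendsto (fun x => Real.sinh x * deriv u x) atTop atBot := by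
    refine tendsto_atBot_of_hasDerivAt_le_neg
      (g' := fun r => n ^ 2 * u r / Real.sinh r - 2 * Real.sinh r * (u r - u r ^ 3))
      (half_pos hc) ?_
    filter_upwards [hsmall, hcubic, eventually_gt_atTop 0,
      Real.tendsto_sinh_atTop.eventually_ge_atTop 1] with r hr₁ hr₂ hr hS
    refine ⟨hsol.hasDerivAt_sinh_mul_deriv isOpen_Ioi hr hr.ne', ?_⟩
    nlinarith
  obtain ⟨r, hneg, hr⟩ := ((hflux.eventually_lt_atBot 0).and (eventually_gt_atTop 0)).exists
  exact hneg.not_ge (mul_pos (Real.sinh_pos_iff.2 hr) (hderiv r hr)).le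

theorem monotone_bounded_is_global_general (n : ℝ)
    (v : ℝ → ℝ → ℝ) (R : ℝ → EReal)
    (hfam : ∀ α : ℝ, 0 ≤ α → IsMaximalVortexSol n α (v α) (R α))
    (α : ℝ) (hα : 0 < α)
    (hmono : ∀ r ∈ MaxDom (R α), 0 < deriv (v α) r)
    (hbd : ∀ r ∈ MaxDom (R α), v α r ≤ 1) :
    R α = ⊤ ∧ Tendsto (v α) atTop (nhds 1) := by
  obtain ⟨hR0, hsol, h0, -, halt⟩ := hfam α hα.le
  have hRtop : R α = ⊤ := eq_top_of_bddAbove_image_maxDom hR0 halt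
    ⟨1, by rintro _ ⟨r, hr, rfl⟩; exact hbd r hr⟩
  have hdom : MaxDom (R α) = Ioi 0 := by ext; simp [MaxDom, hRtop]
  rw [hdom] at hsol hmono hbd
  have hstrict : StrictMonoOn (v α) (Ioi 0) :=
    strictMonoOn_of_deriv_pos (convex_Ioi 0) hsol.1.continuousOn (by rwa [interior_Ioi])
  have hmono₁ : MonotoneOn (v α) (Ici 1) :=
    hstrict.monotoneOn.mono (Ici_subset_Ioi.2 one_pos)
  obtain ⟨L, hL⟩ := hmono₁.exists_tendsto_atTop
    ⟨1, by rintro _ ⟨r, hr, rfl⟩; exact hbd r (show (0 : ℝ) < r from zero_lt_one.trans_le hr)⟩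
  obtain ⟨x, hquot, hx⟩ :=
    ((h0.eventually (eventually_gt_nhds hα)).and (Ioo_mem_nhdsGT one_pos)).exists
  have hL0 : 0 < L := by
    have hvx : 0 < v α x := by simpa [Real.rpow_pos_of_pos hx.1 n] using hquot
    refine (hvx.trans (hstrict hx.1 (mem_Ioi.2 one_pos) hx.2)).trans_le
      (ge_of_tendsto hL ?_)
    filter_upwards [eventually_ge_atTop 1] with r hr using hmono₁ (mem_Ici.2 le_rfl) hr hr
  have hL1 : L ≤ 1 := le_of_tendsto hL (eventually_gt_atTop 0 |>.mono hbd)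
  refine ⟨hRtop, ?_⟩
  rwa [le_antisymm hL1 (one_le_of_isVortexSolOn_Ioi_of_tendsto hsol hmono hL hL0)] at hL

/-- **Monotone bounded shooting solutions are global and converge to `1`.** -/
theorem monotone_bounded_is_global (n : ℝ) (hn : 0 < n)
    (v : ℝ → ℝ → ℝ) (R : ℝ → EReal)
    (hfam : ∀ α : ℝ, 0 ≤ α → IsMaximalVortexSol n α (v α) (R α))
    (α : ℝ) (hα : 0 < α)
    (hmono : ∀ r ∈ MaxDom (R α), 0 < deriv (v α) r)
    (hbd : ∀ r ∈ MaxDom (R α), v α r ≤ 1) :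
    R α = ⊤ ∧ Tendsto (v α) atTop (nhds 1) :=
  monotone_bounded_is_global_general n v R hfam α hα hmono hbd
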